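/- (Classical Tauberian theorem for (L,1), two-sided) If s : [1,∞) → ℂ is locally integrable, slowly oscillating with respect to logarithmic summability, and τ(t) := (1/log t)·∫₁ᵗ s(x)/x dx converges to ℓ as t → ∞, then s(x) → ℓ as x → ∞. -/

import Mathlib

/-!
For `λ > 1` the de la Vallée Poussin combination `(λ τ(x^λ) - τ(x)) / (λ - 1)` of the
logarithmic means is exactly the logarithmic average of `s` over `[x, x^λ]`, so it tends to `ℓ`.
Slow oscillation makes `s` nearly constant on `[x, x^λ]` for suitable `λ` and large `x`, so that
average is within `ε` of `s(x)`.
-/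

open Filter MeasureTheory Set intervalIntegral

/-- `s` is slowly oscillating with respect to logarithmic summability `(L,1)`. -/
def SlowlyOscillatingL1 (s : ℝ → ℂ) : Prop :=
  (⨅ l ∈ Set.Ioi (1 : ℝ),
    Filter.limsup (fun x : ℝ =>
      sSup ((fun t : ℝ => ((‖s t - s x‖ : ℝ) : EReal)) '' Set.Ioc x (x ^ l)))
      Filter.atTop) = 0

theorem SlowlyOscillatingL1.exists_eventually_norm_sub_lt {s : ℝ → ℂ}
    (hso : SlowlyOscillatingL1 s) {ε : ℝ} (hε : 0 < ε) :
    ∃ l : ℝ, 1 < l ∧ ∀ᶠ x in atTop, ∀ t ∈ Ioc x (x ^ l), ‖s t - s x‖ < ε := by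
  have h : (⨅ l ∈ Ioi (1 : ℝ), limsup (fun x : ℝ =>
      sSup ((fun t : ℝ => ((‖s t - s x‖ : ℝ) : EReal)) '' Ioc x (x ^ l))) atTop) < ε :=
    hso ▸ EReal.coe_pos.mpr hε
  simp only [iInf_lt_iff] at h
  obtain ⟨l, hl, hlim⟩ := h
  refine ⟨l, hl, (eventually_lt_of_limsup_lt hlim).mono fun x hx t ht => ?_⟩
  exact_mod_cast (le_sSup (mem_image_of_mem _ ht)).trans_lt hx

theorem IntervalIntegrable.div_ofReal {s : ℝ → ℂ} {a b : ℝ}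
    (hs : IntervalIntegrable s volume a b) (h0 : (0 : ℝ) ∉ uIcc a b) :
    IntervalIntegrable (fun u => s u / u) volume a b := by
  simp_rw [div_eq_mul_inv]
  refine hs.mul_continuousOn (Complex.continuous_ofReal.continuousOn.inv₀ fun u hu => ?_)
  exact Complex.ofReal_ne_zero.mpr (ne_of_mem_of_not_mem hu h0)

theorem MeasureTheory.LocallyIntegrableOn.intervalIntegrable_div_ofReal {s : ℝ → ℂ}
    {c a b : ℝ} (hs : LocallyIntegrableOn s (Ici c)) (hc : 0 < c) (ha : c ≤ a) (hb : c ≤ b) :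
    IntervalIntegrable (fun u => s u / u) volume a b := by
  have hsub : uIcc a b ⊆ Ici c := (Icc_subset_Ici_iff inf_le_sup).mpr (le_inf ha hb)
  refine (hs.integrableOn_compact_subset hsub isCompact_uIcc).intervalIntegrable.div_ofReal ?_
  exact fun h => not_le.mpr hc (hsub h)

theorem integral_ofReal_inv {x y : ℝ} (hx : 0 < x) (hy : 0 < y) :
    ∫ u in x..y, (u : ℂ)⁻¹ = ((Real.log y - Real.log x : ℝ) : ℂ) := by
  simp_rw [← Complex.ofReal_inv]
  rw [intervalIntegral.integral_ofReal, integral_inv_of_pos hx hy, Real.log_div hy.ne' hx.ne']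

noncomputable def logAverage (s : ℝ → ℂ) (a b : ℝ) : ℂ :=
  (Real.log b - Real.log a)⁻¹ • ∫ u in a..b, s u / u

theorem norm_logAverage_sub_le {s : ℝ → ℂ} {x y C : ℝ} (hx : 0 < x) (hxy : x < y)
    (hs : IntervalIntegrable (fun u => s u / u) volume x y)
    (hC : ∀ t ∈ Ioc x y, ‖s t - s x‖ ≤ C) :
    ‖logAverage s x y - s x‖ ≤ C := by
  have hy : 0 < y := hx.trans hxy
  have hL : 0 < Real.log y - Real.log x := sub_pos.mpr (Real.log_lt_log hx hxy)
  have h0 : (0 : ℝ) ∉ uIcc x y := notMem_uIcc_of_lt hx hy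
  have hinv : IntervalIntegrable (fun u : ℝ => (u : ℂ)⁻¹) volume x y := by
    simpa using (intervalIntegrable_const (c := (1 : ℂ))).div_ofReal h0
  have hsplit : ∫ u in x..y, s u / u
      = (∫ u in x..y, (s u - s x) / u) + (Real.log y - Real.log x) • s x := by
    simp_rw [sub_div, div_eq_mul_inv (s x)]
    rw [integral_sub hs (hinv.const_mul _), intervalIntegral.integral_const_mul,
      integral_ofReal_inv hx hy, Complex.real_smul, mul_comm]
    ring
  have hbound : ‖∫ u in x..y, (s u - s x) / u‖ ≤ C * (Real.log y - Real.log x) := by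
    have hg : IntervalIntegrable (fun u : ℝ => C * u⁻¹) volume x y :=
      (intervalIntegrable_inv (fun u hu => ne_of_mem_of_not_mem hu h0)
        continuousOn_id).const_mul C
    calc ‖∫ u in x..y, (s u - s x) / u‖ ≤ ∫ u in x..y, C * u⁻¹ := by
          refine norm_integral_le_of_norm_le hxy.le (ae_of_all _ fun t ht => ?_) hg
          rw [norm_div, Complex.norm_real, Real.norm_of_nonneg (hx.trans ht.1).le, div_eq_mul_inv]
          exact mul_le_mul_of_nonneg_right (hC t ht) (inv_nonneg.mpr (hx.trans ht.1).le)
      _ = C * (Real.log y - Real.log x) := by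
          rw [intervalIntegral.integral_const_mul, integral_inv_of_pos hx hy,
            Real.log_div hy.ne' hx.ne']
  calc ‖logAverage s x y - s x‖
      = (Real.log y - Real.log x)⁻¹ * ‖∫ u in x..y, (s u - s x) / u‖ := by
        rw [logAverage, hsplit, smul_add, inv_smul_smul₀ hL.ne', add_sub_cancel_right, norm_smul,
          norm_inv, Real.norm_of_nonneg hL.le]
    _ ≤ (Real.log y - Real.log x)⁻¹ * (C * (Real.log y - Real.log x)) := by gcongr
    _ = C := by field_simp

theorem logAverage_one_left (s : ℝ → ℂ) (t : ℝ) :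
    logAverage s 1 t = (Real.log t)⁻¹ • ∫ u in (1 : ℝ)..t, s u / u := by
  rw [logAverage, Real.log_one, sub_zero]

theorem logAverage_rpow_eq {s : ℝ → ℂ} {x l : ℝ} (hx : 1 < x) (hl : 1 < l)
    (h1x : IntervalIntegrable (fun u => s u / u) volume 1 x)
    (hxy : IntervalIntegrable (fun u => s u / u) volume x (x ^ l)) :
    logAverage s x (x ^ l) = (l * logAverage s 1 (x ^ l) - logAverage s 1 x) / (l - 1) := by
  have hlog : (Real.log x : ℂ) ≠ 0 := by exact_mod_cast (Real.log_pos hx).ne'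
  have hl0 : (l : ℂ) ≠ 0 := by exact_mod_cast (zero_lt_one.trans hl).ne'
  simp only [logAverage, Real.log_rpow (zero_lt_one.trans hx), Real.log_one, sub_zero,
    ← integral_add_adjacent_intervals h1x hxy, Complex.real_smul]
  push_cast
  field_simp
  ring

theorem stmt16 (s : ℝ → ℂ) (ℓ : ℂ)
    (hs : LocallyIntegrableOn s (Ici (1 : ℝ)))
    (hso : SlowlyOscillatingL1 s)
    (htau : Tendsto (fun t : ℝ => (Real.log t)⁻¹ • ∫ x in (1 : ℝ)..t, s x / (x : ℂ))
      atTop (nhds ℓ)) :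
    Tendsto s atTop (nhds ℓ) := by
  simp_rw [← logAverage_one_left] at htau
  rw [Metric.tendsto_nhds]
  intro ε hε
  obtain ⟨l, hl, hosc⟩ := hso.exists_eventually_norm_sub_lt (half_pos hε)
  have hV : Tendsto (fun x : ℝ => (l * logAverage s 1 (x ^ l) - logAverage s 1 x) / (l - 1))
      atTop (nhds ℓ) := by
    have hl' : (l : ℂ) - 1 ≠ 0 := sub_ne_zero.mpr (by exact_mod_cast hl.ne')
    have h := (((htau.comp (tendsto_rpow_atTop (by linarith))).const_mul (l : ℂ)).sub
      htau).div_const ((l : ℂ) - 1)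
    rwa [show ((l : ℂ) * ℓ - ℓ) / (l - 1) = ℓ by field_simp] at h
  filter_upwards [hosc, eventually_gt_atTop 1, Metric.tendsto_nhds.mp hV _ (half_pos hε)]
    with x hosc_x hx hV_x
  have hxl : x < x ^ l := by simpa using Real.rpow_lt_rpow_of_exponent_lt hx hl
  have hint := hs.intervalIntegrable_div_ofReal one_pos hx.le (hx.trans hxl).le
  rw [← logAverage_rpow_eq hx hl (hs.intervalIntegrable_div_ofReal one_pos le_rfl hx.le) hint]
    at hV_x
  have hs_x := norm_logAverage_sub_le (zero_lt_one.trans hx) hxl hint fun t ht => (hosc_x t ht).le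
  calc dist (s x) ℓ ≤ dist (s x) (logAverage s x (x ^ l)) + dist (logAverage s x (x ^ l)) ℓ :=
        dist_triangle _ _ _
    _ < ε := by rw [dist_comm, dist_eq_norm]; linarith
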